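/- Let n ≥ 2, m ≥ 3, k ≥ 1 be integers. The (n,m,k)-block graph, obtained from K_n by coalescing k pendant copies of K_m at each vertex of K_n, is singular if and only if k·(m-1)/(m-2) = n-1. -/

import Mathlib

open scoped Classical

/-- The `(n,m,k)`-block graph: at each vertex of `K_n`, `k` pendant copies of `K_m` are
coalesced (each copy contributing `m - 1` new vertices). -/
def nmkGraph (n m k : ℕ) : SimpleGraph (Fin n ⊕ Fin n × Fin k × Fin (m - 1)) :=
  SimpleGraph.fromRel fun x y =>
    match x, y with
    | .inl _, .inl _ => True
    | .inl i, .inr p => i = p.1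
    | .inr p, .inr q => p.1 = q.1 ∧ p.2.1 = q.2.1
    | _, _ => False

/-- Determinant of the adjacency matrix of a graph. -/
noncomputable def gdet {V : Type} [Fintype V] (G : SimpleGraph V) : ℝ :=
  Matrix.det (Matrix.of fun i j : V => if G.Adj i j then (1 : ℝ) else 0)

/-!
Listing the clique vertices first, the adjacency matrix of the `(n,m,k)`-block graph is
`[[J - I, Cᵀ], [C, S - I]]`, where `J` is the all-ones matrix of `K_n`, `C` sends a pendant vertex
to its root, and `S` is the all-ones matrix on each pendant copy of `K_{m-1}`. Both `J` and `S`
satisfy `X² = d X` (with `d = n`, resp. `d = m - 1`), and for such `X` the matrix `X - c I`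
(`c ≠ 0`) is invertible exactly when `c ≠ d`. Hence `S - I` is invertible, `S C = (m - 1) C` gives
`(S - I)⁻¹ C = C / (m - 2)`, and the Schur complement is `J - (1 + k (m - 1) / (m - 2)) I`,
which is singular exactly when `1 + k (m - 1) / (m - 2) = n`.
-/

open Matrix

section QuasiIdempotent

variable {K R : Type*} [Field K] [Ring R] [Algebra K R] {S : R} {c d : K}

theorem isUnit_sub_smul_one_of_mul_self_eq_smul (hS : S * S = d • S) (hc : c ≠ 0)
    (hcd : c ≠ d) : IsUnit (S - c • 1) := by
  have hdc : d - c ≠ 0 := sub_ne_zero.2 hcd.symm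
  set T := (c * (d - c))⁻¹ • S - c⁻¹ • (1 : R)
  refine ⟨⟨S - c • 1, T, ?_, ?_⟩, rfl⟩ <;>
  · simp only [T, sub_mul, mul_sub, smul_mul_assoc, mul_smul_comm, one_mul, mul_one, hS]
    match_scalars <;> grind

theorem not_isUnit_sub_smul_one_of_mul_self_eq_smul (hS : S * S = d • S) (hS0 : S ≠ 0) :
    ¬IsUnit (S - d • 1) := fun hu =>
  hS0 <| hu.mul_right_eq_zero.1 <| by rw [sub_mul, hS, smul_mul_assoc, one_mul, sub_self]

theorem isUnit_sub_smul_one_iff_of_mul_self_eq_smul (hS : S * S = d • S) (hS0 : S ≠ 0)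
    (hc : c ≠ 0) : IsUnit (S - c • 1) ↔ c ≠ d :=
  ⟨by rintro hu rfl; exact not_isUnit_sub_smul_one_of_mul_self_eq_smul hS hS0 hu,
    isUnit_sub_smul_one_of_mul_self_eq_smul hS hc⟩

end QuasiIdempotent

section BlockMatrices

variable (K : Type*) [Semiring K] (ι κ μ : Type*)

def allOnes : Matrix ι ι K := of fun _ _ => 1

variable {K ι} in
theorem allOnes_ne_zero [Nontrivial K] [Nonempty ι] : allOnes K ι ≠ 0 := fun h => by
  simpa [allOnes] using congrFun₂ h (Classical.arbitrary ι) (Classical.arbitrary ι)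

variable {K ι} in
theorem allOnes_mul_self [Fintype ι] :
    allOnes K ι * allOnes K ι = (Fintype.card ι : K) • allOnes K ι := by
  ext i j
  simp [allOnes, mul_apply]

variable [DecidableEq ι]

def rootIncidence : Matrix (ι × κ × μ) ι K := of fun p i => if p.1 = i then 1 else 0

variable {K ι κ μ} in
theorem rootIncidence_transpose_mul [Fintype ι] [Fintype κ] [Fintype μ] :
    (rootIncidence K ι κ μ)ᵀ * rootIncidence K ι κ μ =
      ((Fintype.card κ : K) * Fintype.card μ) • 1 := by
  ext i j
  simp only [rootIncidence, mul_apply, transpose_apply, of_apply, Matrix.smul_apply, one_apply,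
    Fintype.sum_prod_type, ite_mul, one_mul, zero_mul]
  rcases eq_or_ne i j with rfl | h <;> simp [*]

variable [DecidableEq κ]

def blockOnes : Matrix (ι × κ × μ) (ι × κ × μ) K :=
  of fun p q => if p.1 = q.1 ∧ p.2.1 = q.2.1 then 1 else 0

variable {K ι κ μ} [Fintype ι] [Fintype κ] [Fintype μ]

theorem blockOnes_mul_self :
    blockOnes K ι κ μ * blockOnes K ι κ μ = (Fintype.card μ : K) • blockOnes K ι κ μ := by
  ext p q
  simp only [blockOnes, mul_apply, of_apply, Matrix.smul_apply, Fintype.sum_prod_type, ite_and,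
    ite_mul, one_mul, zero_mul, Finset.sum_ite_eq, Finset.sum_ite_irrel, Finset.sum_const_zero,
    Finset.mem_univ, if_true]
  split_ifs <;> simp

theorem blockOnes_mul_rootIncidence :
    blockOnes K ι κ μ * rootIncidence K ι κ μ = (Fintype.card μ : K) • rootIncidence K ι κ μ := by
  ext p i
  simp only [blockOnes, rootIncidence, mul_apply, of_apply, Matrix.smul_apply,
    Fintype.sum_prod_type, ite_and, ite_mul, one_mul, zero_mul, Finset.sum_ite_eq,
    Finset.sum_ite_irrel, Finset.sum_const_zero, Finset.mem_univ, if_true]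
  split_ifs <;> simp

end BlockMatrices

section SchurComplement

variable {K ι κ μ : Type*} [Field K] [Fintype ι] [Fintype κ] [Fintype μ] [DecidableEq ι]
  [DecidableEq κ] [DecidableEq μ]

theorem isUnit_blockOnes_sub_one (hμ : (Fintype.card μ : K) ≠ 1) :
    IsUnit (blockOnes K ι κ μ - 1) := by
  simpa only [one_smul] using
    isUnit_sub_smul_one_of_mul_self_eq_smul (R := Matrix (ι × κ × μ) (ι × κ × μ) K)
      blockOnes_mul_self one_ne_zero hμ.symm

theorem det_fromBlocks_blockOnes (hμ : (Fintype.card μ : K) ≠ 1) :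
    det (fromBlocks (allOnes K ι - 1) (rootIncidence K ι κ μ)ᵀ (rootIncidence K ι κ μ)
        (blockOnes K ι κ μ - 1)) =
      det (blockOnes K ι κ μ - 1) *
        det (allOnes K ι -
          (1 + (Fintype.card κ * Fintype.card μ : K) / (Fintype.card μ - 1)) • 1) := by
  set C := rootIncidence K ι κ μ
  set D := blockOnes K ι κ μ - 1
  let := (isUnit_blockOnes_sub_one (ι := ι) (κ := κ) hμ).invertible
  have hμ' : (Fintype.card μ - 1 : K) ≠ 0 := sub_ne_zero.2 hμ
  have hDC : D * C = (Fintype.card μ - 1 : K) • C := by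
    rw [Matrix.sub_mul, blockOnes_mul_rootIncidence, Matrix.one_mul, sub_smul, one_smul]
  have hDinvC : ⅟D * C = (Fintype.card μ - 1 : K)⁻¹ • C := by
    calc ⅟D * C = (Fintype.card μ - 1 : K)⁻¹ • (⅟D * (D * C)) := by
          rw [hDC, Matrix.mul_smul, smul_smul, inv_mul_cancel₀ hμ', one_smul]
      _ = _ := by rw [Matrix.invOf_mul_cancel_left]
  rw [det_fromBlocks₂₂, Matrix.mul_assoc, hDinvC, Matrix.mul_smul, rootIncidence_transpose_mul,
    smul_smul, inv_mul_eq_div, add_smul, one_smul, sub_sub]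

theorem det_fromBlocks_blockOnes_eq_zero_iff [Nonempty ι] (hμ : (Fintype.card μ : K) ≠ 1)
    (hα : 1 + (Fintype.card κ * Fintype.card μ : K) / (Fintype.card μ - 1) ≠ 0) :
    det (fromBlocks (allOnes K ι - 1) (rootIncidence K ι κ μ)ᵀ (rootIncidence K ι κ μ)
        (blockOnes K ι κ μ - 1)) = 0 ↔
      (Fintype.card κ * Fintype.card μ : K) / (Fintype.card μ - 1) = Fintype.card ι - 1 := by
  have hD : det (blockOnes K ι κ μ - 1) ≠ 0 :=
    ((isUnit_iff_isUnit_det _).1 (isUnit_blockOnes_sub_one hμ)).ne_zero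
  rw [det_fromBlocks_blockOnes hμ, mul_eq_zero, or_iff_right hD, ← not_ne_iff,
    ← isUnit_iff_ne_zero, ← isUnit_iff_isUnit_det,
    isUnit_sub_smul_one_iff_of_mul_self_eq_smul allOnes_mul_self allOnes_ne_zero hα, not_not,
    eq_sub_iff_add_eq, add_comm]

end SchurComplement

theorem gdet_eq_det_adjMatrix {V : Type} [Fintype V] [DecidableEq V] (G : SimpleGraph V)
    [DecidableRel G.Adj] : gdet G = (G.adjMatrix ℝ).det := by
  unfold gdet
  congr! 1
  ext i j
  simp [SimpleGraph.adjMatrix_apply]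

theorem nmkGraph_adjMatrix (n m k : ℕ) :
    (nmkGraph n m k).adjMatrix ℝ =
      fromBlocks (allOnes ℝ (Fin n) - 1) (rootIncidence ℝ (Fin n) (Fin k) (Fin (m - 1)))ᵀ
        (rootIncidence ℝ (Fin n) (Fin k) (Fin (m - 1)))
        (blockOnes ℝ (Fin n) (Fin k) (Fin (m - 1)) - 1) := by
  ext (i | p) (j | q) <;> rw [SimpleGraph.adjMatrix_apply]
  · by_cases h : i = j <;> simp [nmkGraph, allOnes, one_apply, h]
  · by_cases h : i = q.1 <;> simp [nmkGraph, rootIncidence, h, eq_comm]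
  · by_cases h : p.1 = j <;> simp [nmkGraph, rootIncidence, h, eq_comm]
  · obtain ⟨a, b, x⟩ := p
    obtain ⟨a', b', y⟩ := q
    by_cases h₁ : a = a' <;> by_cases h₂ : b = b' <;> by_cases h₃ : x = y <;>
      simp [nmkGraph, blockOnes, one_apply, h₁, h₂, h₃, eq_comm]

theorem stmt_17_general (n m k : ℕ) (hn : 2 ≤ n) (hm : 3 ≤ m) :
    gdet (nmkGraph n m k) = 0 ↔
      (k : ℝ) * ((m : ℝ) - 1) / ((m : ℝ) - 2) = (n : ℝ) - 1 := by
  have hm₃ : (3 : ℝ) ≤ m := by exact_mod_cast hm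
  have hm₁ : ((m - 1 : ℕ) : ℝ) = m - 1 := by rw [Nat.cast_sub (by omega), Nat.cast_one]
  have hμ : (Fintype.card (Fin (m - 1)) : ℝ) ≠ 1 := by
    rw [Fintype.card_fin, hm₁]
    linarith
  have hα : (Fintype.card (Fin k) * Fintype.card (Fin (m - 1)) /
      (Fintype.card (Fin (m - 1)) - 1) : ℝ) = k * (m - 1) / (m - 2) := by
    rw [Fintype.card_fin, Fintype.card_fin, hm₁]
    ring
  have hα₀ : (0 : ℝ) ≤ k * (m - 1) / (m - 2) :=
    div_nonneg (mul_nonneg k.cast_nonneg (by linarith)) (by linarith)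
  have : Nonempty (Fin n) := ⟨⟨0, by omega⟩⟩
  rw [gdet_eq_det_adjMatrix, nmkGraph_adjMatrix,
    det_fromBlocks_blockOnes_eq_zero_iff hμ (by rw [hα]; linarith), hα, Fintype.card_fin]

/-- An `(n,m,k)`-block graph is singular if and only if `k (m-1)/(m-2) = n - 1`. -/
theorem stmt_17 (n m k : ℕ) (hn : 2 ≤ n) (hm : 3 ≤ m) (hk : 1 ≤ k) :
    gdet (nmkGraph n m k) = 0 ↔
      (k : ℝ) * ((m : ℝ) - 1) / ((m : ℝ) - 2) = (n : ℝ) - 1 :=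
  stmt_17_general n m k hn hm
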